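/- Define X_0(n,m) = Σ_{(m_0,…,m_n)} (−1)^{ε(m_*)} · Σ_{i=1}^{n} (−1)^{m_0+⋯+m_{i−1}}, the sum over all (n+1)-tuples of nonnegative integers with m_0+⋯+m_n = m. Then for all integers j ≥ 1 and k ≥ 1: X_0(2j, 2k) = 2j·C(j+k, j); X_0(2j, 2k−1) = 0; X_0(2j−1, 2k) = (2j+2k−1)·C(j+k−1, k); and X_0(2j−1, 2k−1) = 2k·C(j+k−1, k). Here C(a,b) denotes the binomial coefficient. -/

import Mathlib

open Finset

/-- `eps n v = v (n-1) + v (n-3) + ⋯`: the exponent of the sign of the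
shuffle encoded by the tuple `v = (m_0, …, m_n)`. -/
def eps (n : ℕ) (v : Fin (n+1) → ℕ) : ℕ :=
  ∑ t ∈ Finset.range ((n+1)/2), v ⟨n - 1 - 2*t, by omega⟩

/-- `psumV n v i = v 0 + v 1 + ⋯ + v (i-1)`. -/
def psumV (n : ℕ) (v : Fin (n+1) → ℕ) (i : ℕ) : ℕ :=
  ∑ t : Fin (n+1), if (t : ℕ) < i then v t else 0

/-- `X₀(n,m)`: the sum over all shuffles (encoded by `(n+1)`-tuples summing
to `m`) of the oriented sign sum `sgn σ · Σ_{i=1}^n sgn_σ(a_i, b_1, …, b_m)`. -/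
def X0 (n m : ℕ) : ℤ :=
  ∑ v ∈ Finset.Nat.antidiagonalTuple (n+1) m,
    (-1 : ℤ) ^ eps n v * ∑ i ∈ Finset.Icc 1 n, (-1 : ℤ) ^ psumV n v i


/-!
Peeling off `m_0` writes a shuffle of `n+1` letters `a` with `m` letters `b` as `b^{m_0}` followed
by a shuffle of `n` letters: the sign exponent `ε` gains `m_0` exactly when `n` is even, and every
partial sum `m_0 + ⋯ + m_i` gains `m_0`. Hence `X_0(n+1, ·)` and the signed shuffle count
`A(n+1, ·)` (`shuffleSignSum`) are convolutions of `X_0(n, ·)` and `A(n, ·)` with `i ↦ (±1)^i`, i.e. they satisfy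
the Pascal-type recurrences
`A(n+1, m+1) = A(n, m+1) + (-1)^(n+1) A(n+1, m)` and
`X_0(n+1, m+1) = A(n, m+1) + X_0(n, m+1) + (-1)^n X_0(n+1, m)`,
which the closed forms, split by the parities of `n` and `m`, satisfy as well.
-/

lemma Finset.Nat.sum_antidiagonalTuple_succ {M : Type*} [AddCommMonoid M] (k m : ℕ)
    (f : (Fin (k+1) → ℕ) → M) :
    ∑ v ∈ antidiagonalTuple (k+1) m, f v
      = ∑ i ∈ range (m+1), ∑ w ∈ antidiagonalTuple k (m-i), f (Fin.cons i w) := by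
  rw [← sum_antidiagonal_eq_sum_range_succ_mk (fun p => ∑ w ∈ antidiagonalTuple k p.2,
    f (Fin.cons p.1 w)), sum_sigma']
  refine sum_nbij' (fun v => ⟨(v 0, ∑ i, Fin.tail v i), Fin.tail v⟩)
    (fun x => Fin.cons x.1.1 x.2) ?_ ?_ ?_ ?_ ?_
  · intro v hv
    rw [mem_antidiagonalTuple, Fin.sum_univ_succ] at hv
    simp [mem_sigma, mem_antidiagonalTuple, ← hv, Fin.tail]
  · rintro ⟨⟨i, p⟩, w⟩ hx
    simp only [mem_sigma, HasAntidiagonal.mem_antidiagonal, mem_antidiagonalTuple] at hx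
    rw [mem_antidiagonalTuple, Fin.sum_cons, hx.2, hx.1]
  · intro v _
    exact Fin.cons_self_tail v
  · rintro ⟨⟨i, p⟩, w⟩ hx
    simp only [mem_sigma, mem_antidiagonalTuple] at hx
    simp [hx.2]
  · intro v _
    rw [Fin.cons_self_tail]

lemma sum_range_succ_pow_mul_sub {R : Type*} [CommSemiring R] (s : R) (g : ℕ → R) (m : ℕ) :
    ∑ i ∈ range (m+2), s^i * g (m+1-i)
      = g (m+1) + s * ∑ i ∈ range (m+1), s^i * g (m-i) := by
  rw [sum_range_succ', mul_sum, add_comm]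
  simp only [pow_zero, one_mul, Nat.sub_zero, pow_succ, Nat.add_sub_add_right]
  congr 1
  exact sum_congr rfl fun i _ => by ring

lemma Fin.cons_mk_of_pos {n : ℕ} {α : Type*} (x : α) (w : Fin n → α) {i : ℕ} (h : i < n+1)
    (hi : 0 < i) : (Fin.cons x w : Fin (n+1) → α) ⟨i, h⟩ = w ⟨i - 1, by omega⟩ := by
  obtain ⟨i, rfl⟩ := Nat.exists_eq_add_one_of_ne_zero hi.ne'
  exact Fin.cons_succ (α := fun _ => α) x w ⟨i, by omega⟩

lemma eps_cons (n x : ℕ) (w : Fin (n+1) → ℕ) :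
    eps (n+1) (Fin.cons x w) = (if Even n then x else 0) + eps n w := by
  have shift : ∀ t, 2*t < n → (Fin.cons x w : Fin (n+2) → ℕ) ⟨n+1-1-2*t, by omega⟩
      = w ⟨n-1-2*t, by omega⟩ := fun t ht => by
    rw [Fin.cons_mk_of_pos _ _ _ (by omega)]
    congr 2
    omega
  rcases Nat.even_or_odd' n with ⟨c, rfl | rfl⟩
  · have hlast : (Fin.cons x w : Fin (2*c+2) → ℕ) ⟨2*c+1-1-2*c, by omega⟩ = x := by
      simp
    rw [eps, show (2*c+1+1)/2 = c+1 by omega, sum_range_succ, hlast, if_pos (even_two_mul c),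
      add_comm, eps, show (2*c+1)/2 = c by omega]
    exact congrArg _ (sum_congr rfl fun t ht => shift t (by rw [mem_range] at ht; omega))
  · rw [eps, show (2*c+1+1+1)/2 = (2*c+1+1)/2 by omega, if_neg (by simp), zero_add, eps]
    exact sum_congr rfl fun t ht => shift t (by rw [mem_range] at ht; omega)

lemma neg_one_pow_eps_cons (n x : ℕ) (w : Fin (n+1) → ℕ) :
    (-1 : ℤ) ^ eps (n+1) (Fin.cons x w) = ((-1 : ℤ)^(n+1))^x * (-1) ^ eps n w := by
  rw [eps_cons, pow_add]
  rcases Nat.even_or_odd n with hn | hn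
  · rw [if_pos hn, hn.add_one.neg_one_pow]
  · rw [if_neg (Nat.not_even_iff_odd.mpr hn), hn.add_one.neg_one_pow, pow_zero, one_pow]

lemma psumV_cons_succ (n x : ℕ) (w : Fin (n+1) → ℕ) (i : ℕ) :
    psumV (n+1) (Fin.cons x w) (i+1) = x + psumV n w i := by
  simp [psumV, Fin.sum_univ_succ]

lemma Finset.sum_Icc_one_eq_sum_range {M : Type*} [AddCommMonoid M] (n : ℕ) (f : ℕ → M) :
    ∑ i ∈ Icc 1 n, f i = ∑ i ∈ range n, f (i+1) := by
  rw [← Ico_add_one_right_eq_Icc, sum_Ico_eq_sum_range]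
  simp [add_comm]

lemma sum_neg_one_pow_psumV_cons (n x : ℕ) (w : Fin (n+1) → ℕ) :
    ∑ i ∈ Icc 1 (n+1), (-1 : ℤ)^psumV (n+1) (Fin.cons x w) i
      = (-1 : ℤ)^x * (1 + ∑ i ∈ Icc 1 n, (-1 : ℤ)^psumV n w i) := by
  have psumV_zero : psumV n w 0 = 0 := by simp [psumV]
  simp only [sum_Icc_one_eq_sum_range, psumV_cons_succ, pow_add, ← mul_sum, sum_range_succ',
    psumV_zero, pow_zero, add_comm]

def shuffleSignSum (n m : ℕ) : ℤ :=
  ∑ v ∈ Nat.antidiagonalTuple (n+1) m, (-1 : ℤ) ^ eps n v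

lemma shuffleSignSum_succ (n m : ℕ) :
    shuffleSignSum (n+1) m
      = ∑ i ∈ range (m+1), ((-1 : ℤ)^(n+1))^i * shuffleSignSum n (m-i) := by
  rw [shuffleSignSum, Nat.sum_antidiagonalTuple_succ]
  simp only [shuffleSignSum, neg_one_pow_eps_cons, mul_sum]

lemma X0_succ (n m : ℕ) :
    X0 (n+1) m
      = ∑ i ∈ range (m+1), ((-1 : ℤ)^n)^i * (shuffleSignSum n (m-i) + X0 n (m-i)) := by
  have sign : ∀ i : ℕ, ((-1 : ℤ)^(n+1))^i * (-1)^i = ((-1 : ℤ)^n)^i := fun i => by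
    rw [← mul_pow, pow_succ, mul_assoc, neg_one_mul, neg_neg, mul_one]
  rw [X0, Nat.sum_antidiagonalTuple_succ]
  refine sum_congr rfl fun i _ => ?_
  rw [X0, shuffleSignSum, ← sum_add_distrib, mul_sum]
  refine sum_congr rfl fun w _ => ?_
  rw [neg_one_pow_eps_cons, sum_neg_one_pow_psumV_cons, ← sign]
  ring

lemma shuffleSignSum_succ_succ (n m : ℕ) :
    shuffleSignSum (n+1) (m+1)
      = shuffleSignSum n (m+1) + (-1 : ℤ)^(n+1) * shuffleSignSum (n+1) m := by
  rw [shuffleSignSum_succ, shuffleSignSum_succ, sum_range_succ_pow_mul_sub]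

lemma X0_succ_succ (n m : ℕ) :
    X0 (n+1) (m+1) = shuffleSignSum n (m+1) + X0 n (m+1) + (-1 : ℤ)^n * X0 (n+1) m := by
  rw [X0_succ, X0_succ, sum_range_succ_pow_mul_sub (g := fun z => shuffleSignSum n z + X0 n z)]

lemma shuffleSignSum_zero_left (m : ℕ) : shuffleSignSum 0 m = 1 := by
  simp [shuffleSignSum, eps]

lemma shuffleSignSum_zero_right (n : ℕ) : shuffleSignSum n 0 = 1 := by
  simp [shuffleSignSum, Nat.antidiagonalTuple_zero_right, eps]

lemma X0_zero_left (m : ℕ) : X0 0 m = 0 := by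
  simp [X0]

lemma X0_zero_right (n : ℕ) : X0 n 0 = n := by
  simp [X0, Nat.antidiagonalTuple_zero_right, eps, psumV]

/-- The Gaussian binomial coefficient `[n+m choose n]_q` at `q = -1`. -/
def shuffleSignSumClosed (n m : ℕ) : ℤ :=
  if n % 2 = 1 ∧ m % 2 = 1 then 0 else ((n/2 + m/2).choose (n/2) : ℤ)

def X0Closed (n m : ℕ) : ℤ :=
  if n % 2 = 0 then
    if m % 2 = 1 then 0 else (n : ℤ) * (n/2 + m/2).choose (n/2)
  else if m % 2 = 0 then ((n : ℤ) + m) * (n/2 + m/2).choose (m/2)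
  else ((m : ℤ) + 1) * (n/2 + m/2 + 1).choose (m/2 + 1)

section ClosedForms

variable (a b : ℕ)

lemma shuffleSignSumClosed_even_even : shuffleSignSumClosed (2*a) (2*b) = (a+b).choose a := by
  rw [shuffleSignSumClosed, if_neg (by omega), (by omega : 2*a/2 = a), (by omega : 2*b/2 = b)]

lemma shuffleSignSumClosed_even_odd : shuffleSignSumClosed (2*a) (2*b+1) = (a+b).choose a := by
  rw [shuffleSignSumClosed, if_neg (by omega), (by omega : 2*a/2 = a), (by omega : (2*b+1)/2 = b)]

lemma shuffleSignSumClosed_odd_even : shuffleSignSumClosed (2*a+1) (2*b) = (a+b).choose a := by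
  rw [shuffleSignSumClosed, if_neg (by omega), (by omega : (2*a+1)/2 = a), (by omega : 2*b/2 = b)]

lemma shuffleSignSumClosed_odd_odd : shuffleSignSumClosed (2*a+1) (2*b+1) = 0 := by
  rw [shuffleSignSumClosed, if_pos (by omega)]

lemma X0Closed_even_even : X0Closed (2*a) (2*b) = 2 * a * (a+b).choose a := by
  rw [X0Closed, if_pos (by omega), if_neg (by omega), (by omega : 2*a/2 = a),
    (by omega : 2*b/2 = b)]
  push_cast
  ring

lemma X0Closed_even_odd : X0Closed (2*a) (2*b+1) = 0 := by
  rw [X0Closed, if_pos (by omega), if_pos (by omega)]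

lemma X0Closed_odd_even : X0Closed (2*a+1) (2*b) = (2*a + 2*b + 1) * (a+b).choose b := by
  rw [X0Closed, if_neg (by omega), if_pos (by omega), (by omega : (2*a+1)/2 = a),
    (by omega : 2*b/2 = b)]
  push_cast
  ring

lemma X0Closed_odd_odd :
    X0Closed (2*a+1) (2*b+1) = (2*b + 2) * (a+b+1).choose (b+1) := by
  rw [X0Closed, if_neg (by omega), if_neg (by omega), (by omega : (2*a+1)/2 = a),
    (by omega : (2*b+1)/2 = b)]
  push_cast
  ring

end ClosedForms

lemma neg_one_pow_two_mul (c : ℕ) : (-1 : ℤ)^(2*c) = 1 := by simp [pow_mul]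

lemma neg_one_pow_two_mul_add_one (c : ℕ) : (-1 : ℤ)^(2*c+1) = -1 := by simp [pow_succ, pow_mul]

lemma shuffleSignSumClosed_succ_succ (n m : ℕ) :
    shuffleSignSumClosed (n+1) (m+1)
      = shuffleSignSumClosed n (m+1) + (-1)^(n+1) * shuffleSignSumClosed (n+1) m := by
  rcases Nat.even_or_odd' n with ⟨a, rfl | rfl⟩ <;>
    rcases Nat.even_or_odd' m with ⟨b, rfl | rfl⟩ <;>
    simp only [show 2*a+1+1 = 2*(a+1) by ring, show 2*b+1+1 = 2*(b+1) by ring,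
      neg_one_pow_two_mul, neg_one_pow_two_mul_add_one, shuffleSignSumClosed_even_even,
      shuffleSignSumClosed_even_odd, shuffleSignSumClosed_odd_even, shuffleSignSumClosed_odd_odd]
  · ring
  · ring
  · rw [show a+1+b = a+b+1 by ring]
    ring
  · rw [show a+1+(b+1) = a+b+1+1 by ring, show a+(b+1) = a+b+1 by ring, show a+1+b = a+b+1 by ring,
      Nat.choose_succ_succ]
    push_cast
    ring

lemma X0Closed_succ_succ (n m : ℕ) :
    X0Closed (n+1) (m+1)
      = shuffleSignSumClosed n (m+1) + X0Closed n (m+1) + (-1)^n * X0Closed (n+1) m := by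
  rcases Nat.even_or_odd' n with ⟨a, rfl | rfl⟩ <;>
    rcases Nat.even_or_odd' m with ⟨b, rfl | rfl⟩ <;>
    simp only [show 2*a+1+1 = 2*(a+1) by ring, show 2*b+1+1 = 2*(b+1) by ring,
      neg_one_pow_two_mul, neg_one_pow_two_mul_add_one, shuffleSignSumClosed_even_even,
      shuffleSignSumClosed_even_odd, shuffleSignSumClosed_odd_even, shuffleSignSumClosed_odd_odd,
      X0Closed_even_even, X0Closed_even_odd, X0Closed_odd_even, X0Closed_odd_odd]
  · have h1 := Nat.add_one_mul_choose_eq (a+b) b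
    have h2 : (a+b).choose a = (a+b).choose b := Nat.choose_symm_add
    zify at h1 h2
    linear_combination -2*h1 - h2
  · have h2 : (a+(b+1)).choose a = (a+(b+1)).choose (b+1) := Nat.choose_symm_add
    rw [show a+(b+1) = a+b+1 by ring] at h2 ⊢
    zify at h2
    push_cast
    linear_combination (-(2*(a:ℤ)+1)) * h2
  · have h1 := Nat.add_one_mul_choose_eq (a+b) b
    have h2 := Nat.add_one_mul_choose_eq (a+b) a
    have h3 : (a+b).choose a = (a+b).choose b := Nat.choose_symm_add
    rw [show a+1+b = a+b+1 by ring]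
    zify at h1 h2 h3
    push_cast
    linear_combination 2*h1 - 2*h2 + (2*(a:ℤ)+2*(b:ℤ)+2)*h3
  · have h1 := Nat.add_one_mul_choose_eq (a+b+1) a
    have h3 : (a+(b+1)).choose a = (a+(b+1)).choose (b+1) := Nat.choose_symm_add
    rw [show a+(b+1) = a+b+1 by ring] at h3 ⊢
    rw [show a+1+(b+1) = a+b+1+1 by ring]
    zify at h1 h3
    push_cast
    linear_combination -2*h1 + (2*(a:ℤ)+2*(b:ℤ)+3)*h3

lemma shuffleSignSum_eq_shuffleSignSumClosed (n m : ℕ) :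
    shuffleSignSum n m = shuffleSignSumClosed n m := by
  induction n generalizing m with
  | zero => simp [shuffleSignSum_zero_left, shuffleSignSumClosed]
  | succ n ihn =>
    induction m with
    | zero => simp [shuffleSignSum_zero_right, shuffleSignSumClosed]
    | succ m ihm => rw [shuffleSignSum_succ_succ, ihn, ihm, shuffleSignSumClosed_succ_succ]

lemma X0_eq_X0Closed (n m : ℕ) : X0 n m = X0Closed n m := by
  induction n generalizing m with
  | zero => simp [X0_zero_left, X0Closed]
  | succ n ihn =>
    induction m with
    | zero =>
      rw [X0_zero_right, X0Closed]
      split_ifs <;> simp_all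
    | succ m ihm =>
      rw [X0_succ_succ, shuffleSignSum_eq_shuffleSignSumClosed, ihn, ihm, X0Closed_succ_succ]

theorem stmt4 (j k : ℕ) (hj : 1 ≤ j) (hk : 1 ≤ k) :
    X0 (2*j) (2*k) = 2*j*((j+k).choose j : ℤ) ∧
    X0 (2*j) (2*k-1) = 0 ∧
    X0 (2*j-1) (2*k) = (2*j+2*k-1)*((j+k-1).choose k : ℤ) ∧
    X0 (2*j-1) (2*k-1) = 2*k*((j+k-1).choose k : ℤ) := by
  obtain ⟨a, rfl⟩ : ∃ a, j = a + 1 := ⟨j - 1, by omega⟩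
  obtain ⟨b, rfl⟩ : ∃ b, k = b + 1 := ⟨k - 1, by omega⟩
  rw [show 2*(a+1)-1 = 2*a+1 by omega, show 2*(b+1)-1 = 2*b+1 by omega,
    show a+1+(b+1)-1 = a+b+1 by omega]
  simp only [X0_eq_X0Closed]
  refine ⟨?_, X0Closed_even_odd _ _, ?_, ?_⟩
  · exact_mod_cast X0Closed_even_even _ _
  · rw [X0Closed_odd_even, show a+(b+1) = a+b+1 by omega]
    push_cast
    ring
  · rw [X0Closed_odd_odd]
    push_cast
    ring
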